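/- Let L : R^d → R have block gradients that are L̄-Lipschitz in the corresponding block variables, and suppose within rotation r each block i is updated at some epoch t_{r,i} with ‖θ^{τ_r,0} − θ^{t_{r,i},0}‖ ≤ KHηG. Then the full gradient at the rotation start satisfies ‖∇L(θ^{τ_r,0})‖² ≤ 2 Σ_{i=1}^{K} ‖∇_i L(θ^{t_{r,i},0})‖² + 2 K³ H² L̄² η² G². -/
import Mathlib


/-- If the block gradients are `L̄`-Lipschitz in the full variable (with the ℓ²
product norm `√(Σ_j ‖θ¹_j - θ²_j‖²)`), and within a rotation each block `i` is updated
at a point `x i` with `‖θ^{τ_r,0} - x i‖ ≤ K H η G`, then the full squared gradient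
`Σ_i ‖∇_i L(θ^{τ_r,0})‖²` at the rotation start satisfies
`‖∇L(θ^{τ_r,0})‖² ≤ 2 Σ_i ‖∇_i L(x i)‖² + 2 K³ H² L̄² η² G²`. -/
theorem stmt_5 {K : ℕ} {E : Fin K → Type*} [∀ i, NormedAddCommGroup (E i)]
    [∀ i, InnerProductSpace ℝ (E i)]
    (g : ((i : Fin K) → E i) → ∀ i, E i) (Lbar η G : ℝ) (H : ℕ)
    (hLip : ∀ (i : Fin K) (θ₁ θ₂ : (i : Fin K) → E i),
      ‖g θ₁ i - g θ₂ i‖ ≤ Lbar * Real.sqrt (∑ j, ‖θ₁ j - θ₂ j‖ ^ 2))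
    (θτ : (i : Fin K) → E i) (x : Fin K → (i : Fin K) → E i)
    (hmove : ∀ i, Real.sqrt (∑ j, ‖θτ j - x i j‖ ^ 2) ≤ K * H * η * G) :
    ∑ i, ‖g θτ i‖ ^ 2 ≤
      2 * ∑ i, ‖g (x i) i‖ ^ 2 + 2 * K ^ 3 * H ^ 2 * Lbar ^ 2 * η ^ 2 * G ^ 2 := by
  have key : ∀ i : Fin K, ‖g θτ i‖ ^ 2 ≤
      2 * ‖g (x i) i‖ ^ 2 + 2 * (Lbar ^ 2 * ((K * H * η * G) ^ 2)) := by
    intro i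
    have h1 : ‖g θτ i‖ ≤ ‖g (x i) i‖ + ‖g θτ i - g (x i) i‖ := by
      have := norm_add_le (g (x i) i) (g θτ i - g (x i) i)
      simpa using this
    set s := Real.sqrt (∑ j, ‖θτ j - x i j‖ ^ 2) with hs
    have hs0 : 0 ≤ s := Real.sqrt_nonneg _
    have hdiff : ‖g θτ i - g (x i) i‖ ≤ Lbar * s := hLip i θτ (x i)
    have hdiff2 : ‖g θτ i - g (x i) i‖ ^ 2 ≤ Lbar ^ 2 * (K * H * η * G) ^ 2 := by
      have h2 : ‖g θτ i - g (x i) i‖ ^ 2 ≤ (Lbar * s) ^ 2 := by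
        have := sq_le_sq' (by linarith [norm_nonneg (g θτ i - g (x i) i),
          hdiff]) hdiff
        simpa [sq_abs] using this
      have h3 : s ^ 2 ≤ (K * H * η * G) ^ 2 :=
        sq_le_sq' (by linarith [hmove i]) (hmove i)
      calc ‖g θτ i - g (x i) i‖ ^ 2 ≤ (Lbar * s) ^ 2 := h2
        _ = Lbar ^ 2 * s ^ 2 := by ring
        _ ≤ Lbar ^ 2 * (K * H * η * G) ^ 2 := by nlinarith [sq_nonneg Lbar]
    have htri : ‖g θτ i‖ ^ 2 ≤ 2 * ‖g (x i) i‖ ^ 2 + 2 * ‖g θτ i - g (x i) i‖ ^ 2 := by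
      nlinarith [norm_nonneg (g θτ i), norm_nonneg (g (x i) i),
        norm_nonneg (g θτ i - g (x i) i), h1, sq_nonneg (‖g (x i) i‖ - ‖g θτ i - g (x i) i‖)]
    linarith
  calc ∑ i, ‖g θτ i‖ ^ 2
      ≤ ∑ i : Fin K, (2 * ‖g (x i) i‖ ^ 2 + 2 * (Lbar ^ 2 * ((K * H * η * G) ^ 2))) :=
        Finset.sum_le_sum fun i _ => key i
    _ = 2 * ∑ i, ‖g (x i) i‖ ^ 2 + 2 * K ^ 3 * H ^ 2 * Lbar ^ 2 * η ^ 2 * G ^ 2 := by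
        rw [Finset.sum_add_distrib, Finset.sum_const, Finset.mul_sum]
        simp [Finset.card_univ]
        ring
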